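/- Let n be divisible by 6, ρ an n-qubit density matrix, and g, h distinct nontrivial elements of ℤ₂×ℤ₂; set T = T_{[1, n/6+1]}^{(g,h)}. If tr(ρT) = 0 and tr(ρ U(g) T) = 0 (vanishing twisted string order), then the winning probability P_n^{(Q)}(g,h|ρ) = tr(ρ O_{g,h}) is at most 13/16. Thus a state with nontrivial twisted string order is necessary to exceed the value 13/16. -/

import Mathlib

open Matrix Complex
open scoped ComplexOrder

noncomputable section

/-- The state space of `n` qubits, as functions on classical bit strings. -/
abbrev QState (n : ℕ) := (Fin n → Fin 2) → ℂ

/-- Operators on `n` qubits: `2^n × 2^n` complex matrices. -/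
abbrev Op (n : ℕ) := Matrix (Fin n → Fin 2) (Fin n → Fin 2) ℂ

/-- The single-qubit Pauli `X` matrix. -/
def Xmat : Matrix (Fin 2) (Fin 2) ℂ := !![0, 1; 1, 0]

/-- The single-qubit Pauli `Z` matrix. -/
def Zmat : Matrix (Fin 2) (Fin 2) ℂ := !![1, 0; 0, -1]

/-- Map a 1-based cyclic site label `j ∈ {1,…,n}` (taken mod `n`) to an index in `Fin n`. -/
def site (n : ℕ) [NeZero n] (j : ℕ) : Fin n :=
  ⟨(j + (n - 1)) % n, Nat.mod_lt _ (Nat.pos_of_ne_zero (NeZero.ne n))⟩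

/-- The operator acting as the single-qubit matrix `M` on qubit `i` and as identity elsewhere. -/
def onSite (n : ℕ) (i : Fin n) (M : Matrix (Fin 2) (Fin 2) ℂ) : Op n :=
  Matrix.of fun s t => (if ∀ k, k ≠ i → s k = t k then 1 else 0) * M (s i) (t i)

/-- Pauli `X` on (1-based, cyclic) site `j`. -/
def PX (n : ℕ) [NeZero n] (j : ℕ) : Op n := onSite n (site n j) Xmat

/-- Pauli `Z` on (1-based, cyclic) site `j`. -/
def PZ (n : ℕ) [NeZero n] (j : ℕ) : Op n := onSite n (site n j) Zmat

/-- The cyclic cluster stabilizer `K_j = Z_{j-1} X_j Z_{j+1}` (for `1 ≤ j ≤ n`). -/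
def Kstab (n : ℕ) [NeZero n] (j : ℕ) : Op n := PZ n (j - 1) * PX n j * PZ n (j + 1)

/-- The symmetry group `ℤ₂ × ℤ₂`. -/
abbrev G2 := ZMod 2 × ZMod 2

/-- The nontrivial element `x = (0,1)` of `ℤ₂ × ℤ₂`. -/
def gx : G2 := (0, 1)

/-- The nontrivial element `y = (1,0)` of `ℤ₂ × ℤ₂`. -/
def gy : G2 := (1, 0)

/-- The nontrivial element `z = (1,1)` of `ℤ₂ × ℤ₂`. -/
def gz : G2 := (1, 1)

/-- The global symmetry representation `U((a,b)) = ∏_{j odd} X_j^a ∏_{j even} X_j^b`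
on `n` qubits (`n` even), written as a product over the `n/2` two-site blocks. -/
def Usym (n : ℕ) [NeZero n] (g : G2) : Op n :=
  ((List.range (n / 2)).map
    (fun p => PX n (2 * p + 1) ^ g.1.val * PX n (2 * p + 2) ^ g.2.val)).prod

/-- Left boundary operator `V^L_p((a,b))`: `Z^b` on qubit `2p-1` and `X^b Z^a` on qubit `2p`. -/
def VL (n : ℕ) [NeZero n] (p : ℕ) (g : G2) : Op n :=
  PZ n (2 * p - 1) ^ g.2.val * (PX n (2 * p) ^ g.2.val * PZ n (2 * p) ^ g.1.val)

/-- Right boundary operator `V^R_p((a,b))`: `Z^b X^a` on qubit `2p-1` and `Z^a` on qubit `2p`. -/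
def VR (n : ℕ) [NeZero n] (p : ℕ) (g : G2) : Op n :=
  (PZ n (2 * p - 1) ^ g.2.val * PX n (2 * p - 1) ^ g.1.val) * PZ n (2 * p) ^ g.1.val

/-- Truncated symmetry `U_{[p,q]}((a,b)) = ∏_{r=p+1}^{q-1} X_{2r-1}^a X_{2r}^b`. -/
def Ustr (n : ℕ) [NeZero n] (p q : ℕ) (g : G2) : Op n :=
  ((List.range (q - (p + 1))).map
    (fun r => PX n (2 * (p + 1 + r) - 1) ^ g.1.val * PX n (2 * (p + 1 + r)) ^ g.2.val)).prod

/-- The string order parameter `S_{[p,q]}(g) = V^L_p(g) · U_{[p,q]}(g) · V^R_q(g)`. -/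
def SOPm (n : ℕ) [NeZero n] (p q : ℕ) (g : G2) : Op n :=
  VL n p g * Ustr n p q g * VR n q g

/-- The twisted string order parameter
`T_{[p,q]}^{(g,h)} = V^R_q(g) · U(h) · V^L_p(g) · U_{[p,q]}(g)`. -/
def TSOP (n : ℕ) [NeZero n] (p q : ℕ) (g h : G2) : Op n :=
  VR n q g * Usym n h * VL n p g * Ustr n p q g

/-- The triangle-game winning operator
`O_{g,h} = (1/32)(12·1 + 12 U(g) + U(h) + U(gh) − 3T − 3U(g)T)` with `T = T_{[1,n/6+1]}^{(g,h)}`. -/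
def Owin (n : ℕ) [NeZero n] (g h : G2) : Op n :=
  (32 : ℂ)⁻¹ • (12 • (1 : Op n) + 12 • Usym n g + Usym n h + Usym n (g + h)
    - 3 • TSOP n 1 (n / 6 + 1) g h - 3 • (Usym n g * TSOP n 1 (n / 6 + 1) g h))

/-- The `n`-fold tensor product `|+⟩^{⊗n}`, with all amplitudes `(1/√2)^n`. -/
def plusState (n : ℕ) : QState n := fun _ => (((Real.sqrt 2)⁻¹ : ℝ) : ℂ) ^ n

/-- The controlled-`Z` gate between (1-based, cyclic) sites `j` and `k`. -/
def CZm (n : ℕ) [NeZero n] (j k : ℕ) : Op n :=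
  Matrix.of fun s t =>
    if s = t then (if s (site n j) = 1 ∧ s (site n k) = 1 then -1 else 1) else 0

/-- The `n`-qubit cyclic cluster state `|C_n⟩ = (∏_{j=1}^n CZ_{j,j+1}) |+⟩^{⊗n}`. -/
def cluster (n : ℕ) [NeZero n] : QState n :=
  (((List.range n).map (fun j => CZm n (j + 1) (j + 2))).prod).mulVec (plusState n)

/-! Each `U(k)` acts on computational basis states by a bit flip `s ↦ s + w`, so it is a
Hermitian involution and `re tr(ρ U(k)) ≤ 1` for a density matrix `ρ`. Once both twisted string
order terms vanish, `tr(ρ O_{g,h}) = (12 + 12 tr(ρU(g)) + tr(ρU(h)) + tr(ρU(gh))) / 32 ≤ 26/32`. -/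

lemma re_trace_mul_le_of_isHermitian_of_mul_self {m : Type*} [Fintype m] [DecidableEq m]
    {ρ U : Matrix m m ℂ} (hρ : ρ.PosSemidef) (hU : U.IsHermitian) (hUU : U * U = 1) :
    (ρ * U).trace.re ≤ ρ.trace.re := by
  -- `(1 - U) / 2` is an orthogonal projection, so `tr(ρ (1 - U)) ≥ 0`.
  have hC : (1 - U)ᴴ * (1 - U) = (2 : ℂ) • (1 - U) := by
    rw [conjTranspose_sub, conjTranspose_one, hU.eq, sub_mul, mul_sub, mul_sub, hUU]
    simp only [one_mul, mul_one, two_smul]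
    abel
  have hnonneg : 0 ≤ (ρ * ((2 : ℂ) • (1 - U))).trace := by
    rw [← hC, ← mul_assoc, trace_mul_cycle]
    exact (hρ.mul_mul_conjTranspose_same _).trace_nonneg
  rw [mul_smul_comm, trace_smul, mul_sub, trace_sub, mul_one, smul_eq_mul] at hnonneg
  norm_num [Complex.le_def] at hnonneg
  linarith

lemma fin_two_pi_add_self {ι : Type*} (v : ι → Fin 2) : v + v = 0 := by
  have : ∀ a : Fin 2, a + a = 0 := by decide
  exact funext fun i => this (v i)

section Flip

variable (ι : Type*) [Fintype ι] [DecidableEq ι]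

def flipHom : Multiplicative (ι → Fin 2) →* Matrix (ι → Fin 2) (ι → Fin 2) ℂ where
  toFun w := (Equiv.addRight w.toAdd).permMatrix ℂ
  map_one' := by simp
  map_mul' v w := by rw [toAdd_mul, Equiv.addRight_add, permMatrix_mul]

variable {ι}

lemma flipHom_apply (w : Multiplicative (ι → Fin 2)) (s t : ι → Fin 2) :
    flipHom ι w s t = if t = s + w.toAdd then 1 else 0 := by
  simp [flipHom, PEquiv.toMatrix_apply, eq_comm]

lemma flipHom_isHermitian (w : Multiplicative (ι → Fin 2)) :
    (flipHom ι w).IsHermitian := by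
  have hneg : -w.toAdd = w.toAdd := neg_eq_of_add_eq_zero_left (fin_two_pi_add_self _)
  simp only [IsHermitian, flipHom, MonoidHom.coe_mk, OneHom.coe_mk, conjTranspose_permMatrix,
    Equiv.neg_addRight, hneg]

lemma flipHom_mul_self (w : Multiplicative (ι → Fin 2)) :
    flipHom ι w * flipHom ι w = 1 := by
  rw [← map_mul, ← map_one (flipHom ι)]
  exact congrArg _ (fin_two_pi_add_self w.toAdd)

end Flip

lemma PX_eq_flipHom (n : ℕ) [NeZero n] (j : ℕ) :
    PX n j = flipHom (Fin n) (.ofAdd (Pi.single (site n j) 1)) := by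
  ext s t
  have hX : ∀ a b : Fin 2, Xmat a b = if b = a + 1 then 1 else 0 := by
    intro a b; fin_cases a <;> fin_cases b <;> simp [Xmat]
  have hflip : t = s + Pi.single (site n j) 1 ↔
      (∀ k ≠ site n j, s k = t k) ∧ t (site n j) = s (site n j) + 1 := by
    constructor
    · rintro rfl
      exact ⟨fun k hk => by simp [hk], by simp⟩
    · rintro ⟨hne, hi⟩
      funext k
      by_cases hk : k = site n j
      · subst hk; simpa using hi
      · simp [hk, hne k hk]
  rw [PX, onSite, of_apply, hX, ite_zero_mul_ite_zero, one_mul, flipHom_apply, toAdd_ofAdd]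
  simp only [hflip]

lemma Usym_mem_mrange_flipHom (n : ℕ) [NeZero n] (g : G2) :
    Usym n g ∈ MonoidHom.mrange (flipHom (Fin n)) := by
  have hPX (j : ℕ) : PX n j ∈ MonoidHom.mrange (flipHom (Fin n)) :=
    ⟨_, (PX_eq_flipHom n j).symm⟩
  refine Submonoid.list_prod_mem _ fun A hA => ?_
  obtain ⟨p, -, rfl⟩ := List.mem_map.mp hA
  exact mul_mem (pow_mem (hPX _) _) (pow_mem (hPX _) _)

lemma re_trace_mul_Usym_le {n : ℕ} [NeZero n] {ρ : Op n} (hρ : ρ.PosSemidef) (g : G2) :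
    (ρ * Usym n g).trace.re ≤ ρ.trace.re := by
  obtain ⟨w, hw⟩ := Usym_mem_mrange_flipHom n g
  rw [← hw]
  exact re_trace_mul_le_of_isHermitian_of_mul_self hρ (flipHom_isHermitian w)
    (flipHom_mul_self w)

lemma trace_mul_Owin (n : ℕ) [NeZero n] (ρ : Op n) (g h : G2) :
    (ρ * Owin n g h).trace = 32⁻¹ * (12 * ρ.trace + 12 * (ρ * Usym n g).trace
      + (ρ * Usym n h).trace + (ρ * Usym n (g + h)).trace
      - 3 * (ρ * TSOP n 1 (n / 6 + 1) g h).trace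
      - 3 * (ρ * (Usym n g * TSOP n 1 (n / 6 + 1) g h)).trace) := by
  simp only [Owin, ← Nat.cast_smul_eq_nsmul ℂ, Matrix.mul_smul, mul_add, mul_sub, trace_add,
    trace_sub, trace_smul, mul_one, smul_eq_mul]
  push_cast
  ring

theorem vanishing_twisted_SOP_bound (n : ℕ) [NeZero n]
    (ρ : Op n) (hρ : ρ.PosSemidef) (htr : ρ.trace = 1)
    (g h : G2)
    (hT : (ρ * TSOP n 1 (n / 6 + 1) g h).trace = 0)
    (hUT : (ρ * (Usym n g * TSOP n 1 (n / 6 + 1) g h)).trace = 0) :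
    ((ρ * Owin n g h).trace).re ≤ 13 / 16 := by
  have hU (k : G2) : (ρ * Usym n k).trace.re ≤ 1 := by
    simpa [htr] using re_trace_mul_Usym_le hρ k
  rw [trace_mul_Owin, htr, hT, hUT]
  norm_num [mul_re]
  linarith [hU g, hU h, hU (g + h)]
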